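/- If a Banach algebra A is approximately biprojective and has an approximate identity, then A is pseudo-amenable. -/
import Mathlib


open Filter Topology TensorProduct

noncomputable section


open Filter Topology TensorProduct


/-! Banach bimodules and derivations -/

variable (A : Type) [NonUnitalNormedRing A] [NormedSpace ℂ A]
  [IsScalarTower ℂ A A] [SMulCommClass ℂ A A]

/-- A Banach `A`-bimodule structure on a Banach space `X`: `l a` is the left action of `a`,
`r a` is the right action of `a`. -/
structure BanachBimod (X : Type) [NormedAddCommGroup X] [NormedSpace ℂ X] where
  l : A → X →L[ℂ] X
  r : A → X →L[ℂ] X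
  l_add : ∀ a b, l (a + b) = l a + l b
  l_smul : ∀ (c : ℂ) a, l (c • a) = c • l a
  r_add : ∀ a b, r (a + b) = r a + r b
  r_smul : ∀ (c : ℂ) a, r (c • a) = c • r a
  l_bound : ∃ C : ℝ, ∀ a, ‖l a‖ ≤ C * ‖a‖
  r_bound : ∃ C : ℝ, ∀ a, ‖r a‖ ≤ C * ‖a‖
  l_mul : ∀ a b, l (a * b) = (l a).comp (l b)
  r_mul : ∀ a b, r (a * b) = (r b).comp (r a)
  lr_comm : ∀ a b, (l a).comp (r b) = (r b).comp (l a)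

variable {A}

namespace BanachBimod

variable {X : Type} [NormedAddCommGroup X] [NormedSpace ℂ X]

/-- The dual bimodule structure on `X →L[ℂ] ℂ`. -/
def dual (M : BanachBimod A X) : BanachBimod A (X →L[ℂ] ℂ) where
  l a := (ContinuousLinearMap.compL ℂ X X ℂ).flip (M.r a)
  r a := (ContinuousLinearMap.compL ℂ X X ℂ).flip (M.l a)
  l_add a b := by simp only [M.r_add, map_add]
  l_smul c a := by simp only [M.r_smul, map_smul]
  r_add a b := by simp only [M.l_add, map_add]
  r_smul c a := by simp only [M.l_smul, map_smul]
  l_bound := by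
    obtain ⟨C, hC⟩ := M.r_bound
    refine ⟨‖(ContinuousLinearMap.compL ℂ X X ℂ).flip‖ * C, fun a => ?_⟩
    calc ‖(ContinuousLinearMap.compL ℂ X X ℂ).flip (M.r a)‖
        ≤ ‖(ContinuousLinearMap.compL ℂ X X ℂ).flip‖ * ‖M.r a‖ :=
          (ContinuousLinearMap.compL ℂ X X ℂ).flip.le_opNorm _
      _ ≤ ‖(ContinuousLinearMap.compL ℂ X X ℂ).flip‖ * (C * ‖a‖) := by
          exact mul_le_mul_of_nonneg_left (hC a) (norm_nonneg _)
      _ = ‖(ContinuousLinearMap.compL ℂ X X ℂ).flip‖ * C * ‖a‖ := by ring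
  r_bound := by
    obtain ⟨C, hC⟩ := M.l_bound
    refine ⟨‖(ContinuousLinearMap.compL ℂ X X ℂ).flip‖ * C, fun a => ?_⟩
    calc ‖(ContinuousLinearMap.compL ℂ X X ℂ).flip (M.l a)‖
        ≤ ‖(ContinuousLinearMap.compL ℂ X X ℂ).flip‖ * ‖M.l a‖ :=
          (ContinuousLinearMap.compL ℂ X X ℂ).flip.le_opNorm _
      _ ≤ ‖(ContinuousLinearMap.compL ℂ X X ℂ).flip‖ * (C * ‖a‖) := by
          exact mul_le_mul_of_nonneg_left (hC a) (norm_nonneg _)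
      _ = ‖(ContinuousLinearMap.compL ℂ X X ℂ).flip‖ * C * ‖a‖ := by ring
  l_mul a b := by
    ext φ x
    simp [M.r_mul]
  r_mul a b := by
    ext φ x
    simp [M.l_mul]
  lr_comm a b := by
    ext φ x
    simpa using congrArg φ (congrFun (congrArg DFunLike.coe (M.lr_comm b a)) x)

/-- A continuous derivation from `A` into the bimodule `X`. -/
def IsDerivation (M : BanachBimod A X) (D : A →L[ℂ] X) : Prop :=
  ∀ a b, D (a * b) = M.l a (D b) + M.r b (D a)

/-- `D` is inner. -/
def Inner (M : BanachBimod A X) (D : A →L[ℂ] X) : Prop :=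
  ∃ x : X, ∀ a, D a = M.l a x - M.r a x

/-- `D` is approximately inner: some net of inner derivations converges to `D` pointwise
in norm. -/
def ApproxInner (M : BanachBimod A X) (D : A →L[ℂ] X) : Prop :=
  ∃ (ι : Type) (φ : Filter ι) (x : ι → X), φ.NeBot ∧
    ∀ a, Tendsto (fun i => M.l a (x i) - M.r a (x i)) φ (𝓝 (D a))

/-- `D` is sequentially approximately inner. -/
def SeqApproxInner (M : BanachBimod A X) (D : A →L[ℂ] X) : Prop :=
  ∃ x : ℕ → X, ∀ a, Tendsto (fun n => M.l a (x n) - M.r a (x n)) atTop (𝓝 (D a))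

/-- `D` is boundedly approximately inner: the approximating net of inner derivations is
bounded as a net of operators from `A` to `X`. -/
def BddApproxInner (M : BanachBimod A X) (D : A →L[ℂ] X) : Prop :=
  ∃ (ι : Type) (φ : Filter ι) (x : ι → X), φ.NeBot ∧
    (∃ C : ℝ, ∀ i a, ‖M.l a (x i) - M.r a (x i)‖ ≤ C * ‖a‖) ∧
    ∀ a, Tendsto (fun i => M.l a (x i) - M.r a (x i)) φ (𝓝 (D a))

/-- `D` is uniformly approximately inner: inner derivations approximate `D` uniformly
on the unit ball of `A`, i.e. in operator norm. -/
def UnifApproxInner (M : BanachBimod A X) (D : A →L[ℂ] X) : Prop :=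
  ∃ (ι : Type) (φ : Filter ι) (x : ι → X), φ.NeBot ∧
    ∀ ε > (0 : ℝ), ∀ᶠ i in φ, ∀ a, ‖D a - (M.l a (x i) - M.r a (x i))‖ ≤ ε * ‖a‖

/-- A derivation into the dual module `X →L[ℂ] ℂ` is weak* approximately inner. -/
def WeakStarApproxInner (M : BanachBimod A X) (D : A →L[ℂ] (X →L[ℂ] ℂ)) : Prop :=
  ∃ (ι : Type) (φ : Filter ι) (x : ι → (X →L[ℂ] ℂ)), φ.NeBot ∧
    ∀ (a : A) (ξ : X),
      Tendsto (fun i => (M.dual.l a (x i) - M.dual.r a (x i)) ξ) φ (𝓝 (D a ξ))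

end BanachBimod

variable (A)

/-- `A` is contractible: every continuous derivation into every Banach `A`-bimodule is inner. -/
def Contractible : Prop :=
  ∀ (X : Type) (_ : NormedAddCommGroup X) (_ : NormedSpace ℂ X) (M : BanachBimod A X)
    (D : A →L[ℂ] X), M.IsDerivation D → M.Inner D

def ApproximatelyContractible : Prop :=
  ∀ (X : Type) (_ : NormedAddCommGroup X) (_ : NormedSpace ℂ X) (M : BanachBimod A X)
    (D : A →L[ℂ] X), M.IsDerivation D → M.ApproxInner D

def SeqApproximatelyContractible : Prop :=
  ∀ (X : Type) (_ : NormedAddCommGroup X) (_ : NormedSpace ℂ X) (M : BanachBimod A X)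
    (D : A →L[ℂ] X), M.IsDerivation D → M.SeqApproxInner D

def UnifApproximatelyContractible : Prop :=
  ∀ (X : Type) (_ : NormedAddCommGroup X) (_ : NormedSpace ℂ X) (M : BanachBimod A X)
    (D : A →L[ℂ] X), M.IsDerivation D → M.UnifApproxInner D

def ApproximatelyAmenable : Prop :=
  ∀ (X : Type) (_ : NormedAddCommGroup X) (_ : NormedSpace ℂ X) (M : BanachBimod A X)
    (D : A →L[ℂ] (X →L[ℂ] ℂ)), M.dual.IsDerivation D → M.dual.ApproxInner D

def SeqApproximatelyAmenable : Prop :=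
  ∀ (X : Type) (_ : NormedAddCommGroup X) (_ : NormedSpace ℂ X) (M : BanachBimod A X)
    (D : A →L[ℂ] (X →L[ℂ] ℂ)), M.dual.IsDerivation D → M.dual.SeqApproxInner D

def BddApproximatelyAmenable : Prop :=
  ∀ (X : Type) (_ : NormedAddCommGroup X) (_ : NormedSpace ℂ X) (M : BanachBimod A X)
    (D : A →L[ℂ] (X →L[ℂ] ℂ)), M.dual.IsDerivation D → M.dual.BddApproxInner D

def WeakStarApproximatelyAmenable : Prop :=
  ∀ (X : Type) (_ : NormedAddCommGroup X) (_ : NormedSpace ℂ X) (M : BanachBimod A X)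
    (D : A →L[ℂ] (X →L[ℂ] ℂ)), M.dual.IsDerivation D → M.WeakStarApproxInner D


/-- The projective tensor "seminorm" on the algebraic tensor product `V ⊗[ℂ] W`, relative to
given (semi)norm functions on the factors: the infimum of `∑ να aₙ * νβ bₙ` over all
representations `t = ∑ aₙ ⊗ bₙ`. -/
def projTensorSN {V W : Type} [AddCommGroup V] [Module ℂ V] [AddCommGroup W] [Module ℂ W]
    (να : V → ℝ) (νβ : W → ℝ) (t : V ⊗[ℂ] W) : ℝ :=
  sInf {r : ℝ | ∃ L : List (V × W), t = (L.map fun p => p.1 ⊗ₜ[ℂ] p.2).sum ∧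
      r = (L.map fun p => να p.1 * νβ p.2).sum}

section SN

variable (C : Type) [NonUnitalRing C] [Module ℂ C] [IsScalarTower ℂ C C] [SMulCommClass ℂ C C]

/-- The left action `u ↦ a·u` of `C` on `C ⊗[ℂ] C`. -/
def tactL (a : C) : C ⊗[ℂ] C →ₗ[ℂ] C ⊗[ℂ] C :=
  TensorProduct.map (LinearMap.mulLeft ℂ a) LinearMap.id

/-- The right action `u ↦ u·a` of `C` on `C ⊗[ℂ] C`. -/
def tactR (a : C) : C ⊗[ℂ] C →ₗ[ℂ] C ⊗[ℂ] C :=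
  TensorProduct.map LinearMap.id (LinearMap.mulRight ℂ a)

/-- The multiplication map `π : C ⊗ C → C`. -/
def tpi : C ⊗[ℂ] C →ₗ[ℂ] C := LinearMap.mul' ℂ C

variable (ν : C → ℝ)

/-- Pseudo-amenability of the algebra `C` relative to the (semi)norm function `ν`:
there is an approximate diagonal, i.e. a net `(u_i) ⊂ C ⊗̂ C` with
`a·u_i − u_i·a → 0` (in the projective tensor seminorm) and `π(u_i)a → a` for all `a ∈ C`. -/
def PseudoAmenableSN : Prop :=
  ∃ (ι : Type) (φ : Filter ι) (u : ι → C ⊗[ℂ] C), φ.NeBot ∧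
    (∀ a : C, Tendsto (fun i => projTensorSN ν ν (tactL C a (u i) - tactR C a (u i))) φ (𝓝 0)) ∧
    (∀ a : C, Tendsto (fun i => ν (tpi C (u i) * a - a)) φ (𝓝 0))

/-- Sequential pseudo-amenability. -/
def SeqPseudoAmenableSN : Prop :=
  ∃ u : ℕ → C ⊗[ℂ] C,
    (∀ a : C, Tendsto (fun n => projTensorSN ν ν (tactL C a (u n) - tactR C a (u n))) atTop (𝓝 0)) ∧
    (∀ a : C, Tendsto (fun n => ν (tpi C (u n) * a - a)) atTop (𝓝 0))

/-- Pseudo-contractibility: there is a central approximate diagonal. -/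
def PseudoContractibleSN : Prop :=
  ∃ (ι : Type) (φ : Filter ι) (u : ι → C ⊗[ℂ] C), φ.NeBot ∧
    (∀ (a : C) i, tactL C a (u i) = tactR C a (u i)) ∧
    (∀ a : C, Tendsto (fun i => ν (tpi C (u i) * a - a)) φ (𝓝 0))

/-- Bounded pseudo-contractibility: a central approximate diagonal `(u_i)` such that
`(π(u_i))` is a multiplier-bounded approximate identity. -/
def BddPseudoContractibleSN : Prop :=
  ∃ (ι : Type) (φ : Filter ι) (u : ι → C ⊗[ℂ] C), φ.NeBot ∧
    (∀ (a : C) i, tactL C a (u i) = tactR C a (u i)) ∧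
    (∀ a : C, Tendsto (fun i => ν (tpi C (u i) * a - a)) φ (𝓝 0)) ∧
    (∃ K : ℝ, 0 < K ∧ ∀ i (a : C), ν (tpi C (u i) * a) ≤ K * ν a)

end SN

section Normed

variable (A : Type) [NonUnitalNormedRing A] [NormedSpace ℂ A]
  [IsScalarTower ℂ A A] [SMulCommClass ℂ A A]

def PseudoAmenable : Prop := PseudoAmenableSN A (fun a => ‖a‖)
def SeqPseudoAmenable : Prop := SeqPseudoAmenableSN A (fun a => ‖a‖)
def PseudoContractible : Prop := PseudoContractibleSN A (fun a => ‖a‖)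
def BddPseudoContractible : Prop := BddPseudoContractibleSN A (fun a => ‖a‖)

/-- `A` has a (two-sided) approximate identity. -/
def HasApproxIdentity : Prop :=
  ∃ (ι : Type) (φ : Filter ι) (e : ι → A), φ.NeBot ∧
    ∀ a : A, Tendsto (fun i => e i * a) φ (𝓝 a) ∧ Tendsto (fun i => a * e i) φ (𝓝 a)

/-- `A` has a bounded (two-sided) approximate identity. -/
def HasBoundedApproxIdentity : Prop :=
  ∃ (ι : Type) (φ : Filter ι) (e : ι → A), φ.NeBot ∧ (∃ C : ℝ, ∀ i, ‖e i‖ ≤ C) ∧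
    ∀ a : A, Tendsto (fun i => e i * a) φ (𝓝 a) ∧ Tendsto (fun i => a * e i) φ (𝓝 a)

/-- `A` has a left approximate identity. -/
def HasLeftApproxIdentity : Prop :=
  ∃ (ι : Type) (φ : Filter ι) (e : ι → A), φ.NeBot ∧
    ∀ a : A, Tendsto (fun i => e i * a) φ (𝓝 a)

/-- `A` has a right approximate identity. -/
def HasRightApproxIdentity : Prop :=
  ∃ (ι : Type) (φ : Filter ι) (e : ι → A), φ.NeBot ∧
    ∀ a : A, Tendsto (fun i => a * e i) φ (𝓝 a)

/-- `A` has a central approximate identity. -/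
def HasCentralApproxIdentity : Prop :=
  ∃ (ι : Type) (φ : Filter ι) (e : ι → A), φ.NeBot ∧
    (∀ (a : A) i, a * e i = e i * a) ∧
    ∀ a : A, Tendsto (fun i => e i * a) φ (𝓝 a)

/-- `A` is approximately biprojective: there is a net `(T_α)` of bounded `A`-bimodule morphisms
`A → A ⊗̂ A` with `π ∘ T_α (a) → a` for every `a`. -/
def ApproxBiprojective : Prop :=
  ∃ (ι : Type) (φ : Filter ι) (T : ι → (A →ₗ[ℂ] A ⊗[ℂ] A)), φ.NeBot ∧
    (∀ i, ∃ C : ℝ, ∀ a, projTensorSN (fun x : A => ‖x‖) (fun x : A => ‖x‖) (T i a) ≤ C * ‖a‖) ∧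
    (∀ i (a b : A), T i (a * b) = tactL A a (T i b) ∧ T i (a * b) = tactR A b (T i a)) ∧
    (∀ a : A, Tendsto (fun i => tpi A (T i a)) φ (𝓝 a))

end Normed


end

section Aux

variable (A : Type) [NonUnitalNormedRing A] [NormedSpace ℂ A]
  [IsScalarTower ℂ A A] [SMulCommClass ℂ A A]

lemma exists_list_rep (u : A ⊗[ℂ] A) :
    ∃ L : List (A × A), u = (L.map fun p => p.1 ⊗ₜ[ℂ] p.2).sum := by
  induction u with
  | zero => exact ⟨[], by simp⟩
  | tmul x y => exact ⟨[(x, y)], by simp⟩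
  | add u v hu hv =>
    obtain ⟨L1, h1⟩ := hu
    obtain ⟨L2, h2⟩ := hv
    exact ⟨L1 ++ L2, by simp [h1, h2]⟩

lemma projTensorSN_nonneg (u : A ⊗[ℂ] A) :
    0 ≤ projTensorSN (fun x : A => ‖x‖) (fun x : A => ‖x‖) u := by
  apply Real.sInf_nonneg
  rintro r ⟨L, -, rfl⟩
  apply List.sum_nonneg
  intro x hx
  obtain ⟨p, -, rfl⟩ := List.mem_map.mp hx
  exact mul_nonneg (norm_nonneg _) (norm_nonneg _)

lemma norm_tpi_le (u : A ⊗[ℂ] A) :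
    ‖tpi A u‖ ≤ projTensorSN (fun x : A => ‖x‖) (fun x : A => ‖x‖) u := by
  apply le_csInf
  · obtain ⟨L, hL⟩ := exists_list_rep A u
    exact ⟨(L.map fun p => ‖p.1‖ * ‖p.2‖).sum, L, hL, rfl⟩
  · rintro r ⟨L, rfl, rfl⟩
    induction L with
    | nil => simp
    | cons p L ih =>
      simp only [List.map_cons, List.sum_cons, map_add]
      refine (norm_add_le _ _).trans (add_le_add ?_ ih)
      simp only [tpi, LinearMap.mul'_apply]
      exact norm_mul_le _ _

lemma tpi_tactR (a : A) (u : A ⊗[ℂ] A) : tpi A (tactR A a u) = tpi A u * a := by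
  induction u with
  | zero => simp
  | tmul x y => simp [tpi, tactR, mul_assoc]
  | add u v hu hv => simp [map_add, hu, hv, add_mul]

lemma mul_lt_of_norm_lt {C x ε : ℝ} (hC : 0 ≤ C) (hx : 0 ≤ x) (hε : 0 < ε)
    (h : x < ε / (C + 1)) : C * x < ε := by
  have h0 : (0 : ℝ) < C + 1 := by linarith
  have := (lt_div_iff₀ h0).mp h
  nlinarith

end Aux

lemma bind_map_neBot {ι₁ ι₂ : Type} (φ₁ : Filter ι₁) (φ₂ : Filter ι₂)
    (hφ₁ : φ₁.NeBot) (hφ₂ : φ₂.NeBot) :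
    (φ₁.bind fun i => φ₂.map fun j => (i, j)).NeBot := by
  rw [Filter.neBot_iff]
  intro hbot
  have hemp : (∅ : Set (ι₁ × ι₂)) ∈ φ₁.bind fun i => φ₂.map fun j => (i, j) := by
    rw [hbot]; exact Filter.mem_bot
  rw [Filter.mem_bind'] at hemp
  obtain ⟨i, hi⟩ := hφ₁.nonempty_of_mem hemp
  simp only [Set.mem_setOf_eq, Filter.mem_map] at hi
  have : ((fun j => (i, j)) ⁻¹' (∅ : Set (ι₁ × ι₂))) = ∅ := Set.preimage_empty
  rw [this] at hi
  exact hφ₂.ne (Filter.empty_mem_iff_bot.mp hi)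


/-- If a Banach algebra `A` is approximately biprojective and has an approximate
identity, then `A` is pseudo-amenable. -/
theorem approxBiprojective_hasApproxIdentity_implies_pseudoAmenable
    (A : Type) [NonUnitalNormedRing A] [NormedSpace ℂ A]
    [IsScalarTower ℂ A A] [SMulCommClass ℂ A A] [CompleteSpace A]
    (h1 : ApproxBiprojective A) (h2 : HasApproxIdentity A) : PseudoAmenable A := by
  obtain ⟨ι₁, φ₁, T, hφ₁, hbound, hbim, hlim⟩ := h1
  obtain ⟨ι₂, φ₂, e, hφ₂, he⟩ := h2
  -- choose nonnegative bound constants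
  have hbound' : ∀ i, ∃ C : ℝ, 0 ≤ C ∧
      ∀ a, projTensorSN (fun x : A => ‖x‖) (fun x : A => ‖x‖) (T i a) ≤ C * ‖a‖ := by
    intro i
    obtain ⟨C, hC⟩ := hbound i
    exact ⟨max C 0, le_max_right _ _, fun a =>
      (hC a).trans (mul_le_mul_of_nonneg_right (le_max_left _ _) (norm_nonneg _))⟩
  refine ⟨ι₁ × ι₂, φ₁.bind fun i => φ₂.map fun j => (i, j), fun p => T p.1 (e p.2),
    bind_map_neBot φ₁ φ₂ hφ₁ hφ₂, ?_, ?_⟩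
  · intro a
    rw [Metric.tendsto_nhds]
    intro ε hε
    rw [Filter.eventually_bind]
    refine Filter.Eventually.of_forall fun i => ?_
    rw [Filter.eventually_map]
    obtain ⟨C, hC0, hC⟩ := hbound' i
    have hcomm : Tendsto (fun j => a * e j - e j * a) φ₂ (𝓝 0) := by
      have := ((he a).2.sub (he a).1)
      rwa [sub_self] at this
    have hsmall : ∀ᶠ j in φ₂, ‖a * e j - e j * a‖ < ε / (C + 1) := by
      have := Metric.tendsto_nhds.mp hcomm (ε / (C + 1))
        (div_pos hε (by linarith))
      filter_upwards [this] with j hj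
      rwa [dist_zero_right] at hj
    filter_upwards [hsmall] with j hj
    have key : tactL A a (T i (e j)) - tactR A a (T i (e j))
        = T i (a * e j - e j * a) := by
      rw [map_sub, ← (hbim i a (e j)).1, ← (hbim i (e j) a).2]
    rw [key, Real.dist_eq, sub_zero,
      abs_of_nonneg (projTensorSN_nonneg A _)]
    calc projTensorSN (fun x : A => ‖x‖) (fun x : A => ‖x‖) (T i (a * e j - e j * a))
        ≤ C * ‖a * e j - e j * a‖ := hC _
      _ < ε := mul_lt_of_norm_lt hC0 (norm_nonneg _) hε hj
  · intro a
    rw [Metric.tendsto_nhds]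
    intro ε hε
    rw [Filter.eventually_bind]
    have houter : ∀ᶠ i in φ₁, ‖tpi A (T i a) - a‖ < ε / 2 := by
      have := Metric.tendsto_nhds.mp (hlim a) (ε / 2) (by linarith)
      filter_upwards [this] with i hi
      rwa [dist_eq_norm] at hi
    filter_upwards [houter] with i hi
    rw [Filter.eventually_map]
    obtain ⟨C, hC0, hC⟩ := hbound' i
    have hinner : ∀ᶠ j in φ₂, ‖e j * a - a‖ < (ε / 2) / (C + 1) := by
      have := Metric.tendsto_nhds.mp (he a).1 ((ε / 2) / (C + 1))
        (div_pos (by linarith) (by linarith))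
      filter_upwards [this] with j hj
      rwa [dist_eq_norm] at hj
    filter_upwards [hinner] with j hj
    have key : tpi A (T i (e j)) * a = tpi A (T i (e j * a)) := by
      rw [(hbim i (e j) a).2, tpi_tactR]
    rw [Real.dist_eq, sub_zero, abs_of_nonneg (norm_nonneg _), key]
    have split : tpi A (T i (e j * a)) - a
        = tpi A (T i (e j * a - a)) + (tpi A (T i a) - a) := by
      rw [map_sub, map_sub]; abel
    rw [split]
    calc ‖tpi A (T i (e j * a - a)) + (tpi A (T i a) - a)‖
        ≤ ‖tpi A (T i (e j * a - a))‖ + ‖tpi A (T i a) - a‖ := norm_add_le _ _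
      _ < ε / 2 + ε / 2 :=
          add_lt_add_of_le_of_lt
            (((norm_tpi_le A _).trans (hC _)).trans_lt
              (mul_lt_of_norm_lt hC0 (norm_nonneg _) (by linarith) hj)).le hi
      _ = ε := by ring
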